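/- Let Σ ∈ ℝ^{(n+m)×(n+m)} be symmetric positive semidefinite, w^k ∈ ℝⁿ⁺ᵐ, and γ ∈ (0, 2). Suppose w̃ = (x̃, λ̃) ∈ Ω satisfies the proximal VI at w^k with matrix Σ, and set w^{k+1} = w^k − γ(w^k − w̃). Then for every w = (x, λ) ∈ Ω: f(x) − f(x̃) + (w − w̃)ᵀΓ(w) + (1/(2γ))·(‖w − w^k‖²_Σ − ‖w − w^{k+1}‖²_Σ) ≥ 0. -/

import Mathlib

open Matrix

/-- The continuous linear functional `u ↦ v ⬝ᵥ u` on `ℝⁿ`, used to express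
that `v` is the gradient of a scalar function. -/
noncomputable def dotCLM {n : ℕ} (v : Fin n → ℝ) : (Fin n → ℝ) →L[ℝ] ℝ :=
  LinearMap.toContinuousLinearMap (∑ j, v j • LinearMap.proj j)

/-- The `x`-part of `w = (x, λ) ∈ ℝⁿ⁺ᵐ`. -/
def xpart {n m : ℕ} (w : Fin n ⊕ Fin m → ℝ) : Fin n → ℝ := fun i => w (Sum.inl i)

/-- The `λ`-part of `w = (x, λ) ∈ ℝⁿ⁺ᵐ`. -/
def lpart {n m : ℕ} (w : Fin n ⊕ Fin m → ℝ) : Fin m → ℝ := fun j => w (Sum.inr j)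

/-- `Ω = X × ℝ₊ᵐ` viewed inside `ℝⁿ⁺ᵐ`. -/
def OmegaSet {n m : ℕ} (X : Set (Fin n → ℝ)) : Set (Fin n ⊕ Fin m → ℝ) :=
  {w | xpart w ∈ X ∧ ∀ j, 0 ≤ lpart w j}

/-- `Γ(w) = (DΦ(x)ᵀλ, −Φ(x))` for `w = (x, λ)`, where row `i` of the Jacobian `DΦ`
is the gradient `φ' i`. -/
noncomputable def Gam {n m : ℕ} (φ : Fin m → (Fin n → ℝ) → ℝ)
    (φ' : Fin m → (Fin n → ℝ) → (Fin n → ℝ)) (w : Fin n ⊕ Fin m → ℝ) :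
    Fin n ⊕ Fin m → ℝ :=
  Sum.elim (∑ i, lpart w i • φ' i (xpart w)) (fun i => -(φ i (xpart w)))

lemma dotCLM_apply {n : ℕ} (v u : Fin n → ℝ) : dotCLM v u = v ⬝ᵥ u := by
  simp [dotCLM, dotProduct, LinearMap.sum_apply]

lemma grad_ineq {n : ℕ} {φ : (Fin n → ℝ) → ℝ} (hφ : ConvexOn ℝ Set.univ φ)
    {v : Fin n → ℝ} {x : Fin n → ℝ} (h : HasFDerivAt φ (dotCLM v) x) (y : Fin n → ℝ) :
    v ⬝ᵥ (y - x) ≤ φ y - φ x := by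
  set g : ℝ → ℝ := fun t => φ (x + t • (y - x)) with hg
  have hline : HasDerivAt (fun t : ℝ => x + t • (y - x)) (y - x) 0 := by
    simpa using ((hasDerivAt_id (0:ℝ)).smul_const (y - x)).const_add x
  have hgd : HasDerivAt g (v ⬝ᵥ (y - x)) 0 := by
    have h' : HasFDerivAt φ (dotCLM v) (x + (0:ℝ) • (y - x)) := by simpa using h
    have := h'.comp_hasDerivAt 0 hline
    rw [dotCLM_apply] at this
    exact this
  have hslope := hasDerivAt_iff_tendsto_slope.mp hgd
  have hmono : Filter.Tendsto (slope g 0) (nhdsWithin 0 (Set.Ioi 0)) (nhds (v ⬝ᵥ (y - x))) :=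
    hslope.mono_left (nhdsWithin_mono _ (fun t ht => ne_of_gt ht))
  refine le_of_tendsto hmono ?_
  filter_upwards [Ioc_mem_nhdsGT_of_mem (Set.mem_Ico.mpr ⟨le_refl (0:ℝ), one_pos⟩)] with t ht
  obtain ⟨ht0, ht1⟩ := ht
  have hcvx := hφ.2 (Set.mem_univ x) (Set.mem_univ y) (by linarith : (0:ℝ) ≤ 1 - t)
    (le_of_lt ht0) (by ring)
  have hx : (1 - t) • x + t • y = x + t • (y - x) := by module
  have hgt : g t ≤ φ x + t * (φ y - φ x) := by
    rw [hg]
    simp only []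
    rw [← hx]
    calc φ ((1 - t) • x + t • y) ≤ (1 - t) * φ x + t * φ y := by
          simpa [smul_eq_mul] using hcvx
    _ = φ x + t * (φ y - φ x) := by ring
  rw [slope_def_field]
  have hg0 : g 0 = φ x := by simp [hg]
  rw [div_le_iff₀ (by simpa using ht0)]
  rw [hg0]
  nlinarith [hgt]

lemma dot_sum_smul {n m : ℕ} (c : Fin m → ℝ) (u : Fin n → ℝ) (z : Fin m → (Fin n → ℝ)) :
    u ⬝ᵥ (∑ j, c j • z j) = ∑ j, c j * (u ⬝ᵥ z j) := by
  simp only [dotProduct, Finset.sum_apply, Pi.smul_apply, smul_eq_mul, Finset.mul_sum]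
  rw [Finset.sum_comm]
  exact Finset.sum_congr rfl fun j _ => Finset.sum_congr rfl fun i _ => by ring

lemma dot_split {n m : ℕ} (p q : Fin n ⊕ Fin m → ℝ) :
    p ⬝ᵥ q = xpart p ⬝ᵥ xpart q + lpart p ⬝ᵥ lpart q := by
  simp [dotProduct, Fintype.sum_sum_type, xpart, lpart]

/-- Inequality (53): form of Lemma 3 with `Γ` evaluated at `w` for the relaxed PPA. -/
theorem stmt18 {n m : ℕ}
    (hn : 0 < n) (hm : 0 < m)
    (X : Set (Fin n → ℝ)) (hXne : X.Nonempty) (hXcl : IsClosed X) (hXcvx : Convex ℝ X)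
    (f : (Fin n → ℝ) → ℝ) (hf : ConvexOn ℝ Set.univ f)
    (φ : Fin m → (Fin n → ℝ) → ℝ) (hφ : ∀ i, ConvexOn ℝ Set.univ (φ i))
    (φ' : Fin m → (Fin n → ℝ) → (Fin n → ℝ))
    (hφ' : ∀ i x, HasFDerivAt (φ i) (dotCLM (φ' i x)) x)
    (hφ'c : ∀ i, Continuous (φ' i))
    (S : Matrix (Fin n ⊕ Fin m) (Fin n ⊕ Fin m) ℝ) (hS : S.PosSemidef)
    (γ : ℝ) (hγ0 : 0 < γ) (hγ2 : γ < 2)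
    (wk wt : Fin n ⊕ Fin m → ℝ)
    (hwt : wt ∈ OmegaSet (m := m) X)
    (hprox : ∀ w ∈ OmegaSet (m := m) X,
      f (xpart w) - f (xpart wt) + (w - wt) ⬝ᵥ (Gam φ φ' wt + S.mulVec (wt - wk)) ≥ 0)
    (wk1 : Fin n ⊕ Fin m → ℝ) (hwk1 : wk1 = wk - γ • (wk - wt)) :
    ∀ w ∈ OmegaSet (m := m) X,
      f (xpart w) - f (xpart wt) + (w - wt) ⬝ᵥ Gam φ φ' w
        + (1 / (2 * γ)) *
            ((w - wk) ⬝ᵥ S.mulVec (w - wk) - (w - wk1) ⬝ᵥ S.mulVec (w - wk1))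
      ≥ 0 := by
  intro w hw
  have hstar : ∀ u : Fin n ⊕ Fin m → ℝ, 0 ≤ u ⬝ᵥ S.mulVec u := fun u => by
    simpa using hS.dotProduct_mulVec_nonneg u
  have hsymm : Sᵀ = S := by
    have := hS.1
    rwa [Matrix.IsHermitian, Matrix.conjTranspose_eq_transpose_of_trivial] at this
  have hq : ∀ u v : Fin n ⊕ Fin m → ℝ, u ⬝ᵥ S.mulVec v = v ⬝ᵥ S.mulVec u := by
    intro u v
    rw [Matrix.dotProduct_mulVec, ← Matrix.mulVec_transpose, hsymm, dotProduct_comm]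
  have e1 : w - wk = (w - wt) + (wt - wk) := by abel
  have e2 : w - wk1 = (w - wt) + (1 - γ) • (wt - wk) := by rw [hwk1]; module
  have hkey : (w - wk) ⬝ᵥ S.mulVec (w - wk) - (w - wk1) ⬝ᵥ S.mulVec (w - wk1)
      = 2*γ*((w - wt) ⬝ᵥ S.mulVec (wt - wk)) + γ*(2-γ)*((wt - wk) ⬝ᵥ S.mulVec (wt - wk)) := by
    rw [e1, e2]
    simp only [Matrix.mulVec_add, Matrix.mulVec_smul, dotProduct_add, add_dotProduct,
      dotProduct_smul, smul_dotProduct, smul_eq_mul]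
    linear_combination (γ : ℝ) * hq (wt - wk) (w - wt)
  have hscale : (1/(2*γ)) * (2*γ*((w - wt) ⬝ᵥ S.mulVec (wt - wk))
        + γ*(2-γ)*((wt - wk) ⬝ᵥ S.mulVec (wt - wk)))
      = (w - wt) ⬝ᵥ S.mulVec (wt - wk) + ((2-γ)/2)*((wt - wk) ⬝ᵥ S.mulVec (wt - wk)) := by
    field_simp
  -- monotonicity
  have hmono : 0 ≤ (w - wt) ⬝ᵥ (Gam φ φ' w - Gam φ φ' wt) := by
    have key : (w - wt) ⬝ᵥ (Gam φ φ' w - Gam φ φ' wt)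
        = ∑ j : Fin m,
            (lpart w j * ((xpart w - xpart wt) ⬝ᵥ φ' j (xpart w) - (φ j (xpart w) - φ j (xpart wt)))
            + lpart wt j * ((φ j (xpart w) - φ j (xpart wt)) - (xpart w - xpart wt) ⬝ᵥ φ' j (xpart wt))) := by
      rw [dot_split]
      have hx1 : xpart (w - wt) = xpart w - xpart wt := rfl
      have hx2 : xpart (Gam φ φ' w - Gam φ φ' wt)
          = (∑ j, lpart w j • φ' j (xpart w)) - (∑ j, lpart wt j • φ' j (xpart wt)) := rfl
      have hx3 : lpart (w - wt) = lpart w - lpart wt := rfl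
      have hx4 : lpart (Gam φ φ' w - Gam φ φ' wt)
          = fun j => -(φ j (xpart w)) - (-(φ j (xpart wt))) := rfl
      rw [hx1, hx2, hx3, hx4, dotProduct_sub, dot_sum_smul, dot_sum_smul]
      simp only [dotProduct, Pi.sub_apply]
      rw [← Finset.sum_sub_distrib, ← Finset.sum_add_distrib]
      exact Finset.sum_congr rfl fun j _ => by ring
    rw [key]
    apply Finset.sum_nonneg
    intro j _
    have g1 := grad_ineq (hφ j) (hφ' j (xpart w)) (xpart wt)
    have g2 := grad_ineq (hφ j) (hφ' j (xpart wt)) (xpart w)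
    have c1 : (xpart w - xpart wt) ⬝ᵥ φ' j (xpart w)
        = - (φ' j (xpart w) ⬝ᵥ (xpart wt - xpart w)) := by
      rw [dotProduct_comm, show xpart w - xpart wt = -(xpart wt - xpart w) by abel,
        dotProduct_neg]
    have c2 : (xpart w - xpart wt) ⬝ᵥ φ' j (xpart wt)
        = φ' j (xpart wt) ⬝ᵥ (xpart w - xpart wt) := dotProduct_comm _ _
    have hl1 : 0 ≤ lpart w j := hw.2 j
    have hl2 : 0 ≤ lpart wt j := hwt.2 j
    have t1 : 0 ≤ (xpart w - xpart wt) ⬝ᵥ φ' j (xpart w) - (φ j (xpart w) - φ j (xpart wt)) := by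
      rw [c1]; linarith
    have t2 : 0 ≤ (φ j (xpart w) - φ j (xpart wt)) - (xpart w - xpart wt) ⬝ᵥ φ' j (xpart wt) := by
      rw [c2]; linarith
    exact add_nonneg (mul_nonneg hl1 t1) (mul_nonneg hl2 t2)
  have h1 := hprox w hw
  rw [dotProduct_add] at h1
  have hdec : (w - wt) ⬝ᵥ Gam φ φ' w
      = (w - wt) ⬝ᵥ Gam φ φ' wt + (w - wt) ⬝ᵥ (Gam φ φ' w - Gam φ φ' wt) := by
    rw [dotProduct_sub]; ring
  rw [hkey, hscale, hdec]
  have hdd := hstar (wt - wk)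
  have hco : 0 ≤ ((2-γ)/2) * ((wt - wk) ⬝ᵥ S.mulVec (wt - wk)) :=
    mul_nonneg (by linarith) hdd
  linarith
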